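/- For complex a, b, s with 0 < Re(s) < Re(a) and b not a nonpositive integer, ∫₀^∞ t^{s−1} ₁F₁[a; b; −t] dt = Γ(s)Γ(b)Γ(a−s)/(Γ(a)Γ(b−s)). -/

import Mathlib

open Complex MeasureTheory

/-- Pochhammer symbol (rising factorial) on `ℂ`. -/
noncomputable def poch (a : ℂ) (n : ℕ) : ℂ := (ascPochhammer ℂ n).eval a

/-- Kummer confluent hypergeometric function `₁F₁[a; c; z]`. -/
noncomputable def F11 (a c z : ℂ) : ℂ :=
  ∑' n : ℕ, poch a n / poch c n * z ^ n / (Nat.factorial n : ℂ)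

/-!
For `Re a < Re b`, Euler's integral
`₁F₁[a; b; -t] = Γ(b) / (Γ(a) Γ(b - a)) ∫₀¹ e^{-tu} u^{a-1} (1 - u)^{b-a-1} du`
turns the Mellin transform into a double integral. Integrating first in `t` gives `Γ(s) u^{-s}`,
and what is left is the beta integral `B(a - s, b - a)`.

The general case reduces to this one by the contiguous relation
`₁F₁[a; b; z] = ₁F₁[a; b + 1; z] + a z / (b (b + 1)) ₁F₁[a + 1; b + 2; z]`:
both terms on the right have `Re a - Re b` smaller by one, and the factor `t` only shifts the
Mellin variable `s` to `s + 1`.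
-/

open Set Filter Topology

lemma poch_succ (a : ℂ) (n : ℕ) : poch a (n + 1) = poch a n * (a + n) :=
  ascPochhammer_succ_eval n a

lemma poch_succ' (a : ℂ) (n : ℕ) : poch a (n + 1) = a * poch (a + 1) n := by
  simp [poch, ascPochhammer_succ_left, Polynomial.eval_comp]

lemma poch_ne_zero {b : ℂ} (hb : ∀ n : ℕ, b ≠ -n) (n : ℕ) : poch b n ≠ 0 := by
  simp only [poch, ne_eq, ascPochhammer_eval_eq_zero_iff, not_exists, not_and]
  exact fun k _ h => hb k (by rw [h, neg_neg])

lemma poch_eq_Gamma_div {a : ℂ} (ha : 0 < a.re) (n : ℕ) :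
    poch a n = Gamma (a + n) / Gamma a := by
  refine (Gamma_add_nat_div_Gamma_eq a fun k hk => ?_).symm
  rw [hk, neg_re, natCast_re, neg_pos] at ha
  exact (Nat.cast_nonneg k).not_gt ha

lemma add_natCast_ne_neg_natCast {b : ℂ} (hb : ∀ n : ℕ, b ≠ -n) (m : ℕ) :
    ∀ n : ℕ, b + m ≠ -n :=
  fun n h => hb (n + m) (by push_cast; linear_combination h)

noncomputable def F11Term (a b z : ℂ) (n : ℕ) : ℂ := poch a n / poch b n * z ^ n / n.factorial

lemma F11_eq_tsum (a b z : ℂ) : F11 a b z = ∑' n, F11Term a b z n := rfl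

lemma F11Term_zero (a b z : ℂ) : F11Term a b z 0 = 1 := by
  simp [F11Term, poch]

lemma F11Term_succ (a b z : ℂ) (n : ℕ) :
    F11Term a b z (n + 1) = (a + n) / (b + n) * z / (n + 1) * F11Term a b z n := by
  simp only [F11Term, poch_succ, pow_succ, Nat.factorial_succ, Nat.cast_mul, Nat.cast_add,
    Nat.cast_one]
  field_simp

lemma tendsto_F11Term_ratio (a b z : ℂ) :
    Tendsto (fun n : ℕ => (a + n) / (b + n) * z / (n + 1)) atTop (𝓝 0) := by
  have h1 : Tendsto (fun n : ℕ => (a + n) / (b + n)) atTop (𝓝 1) := by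
    simpa using tendsto_add_mul_div_add_mul_atTop_nhds a b (1 : ℂ) one_ne_zero
  have h2 : Tendsto (fun n : ℕ => z / ((n : ℂ) + 1)) atTop (𝓝 0) := by
    simpa [add_comm] using tendsto_add_mul_div_add_mul_atTop_nhds z 1 0 (one_ne_zero (α := ℂ))
  simpa [mul_div_assoc] using h1.mul h2

lemma summable_F11Term (a b z : ℂ) : Summable (F11Term a b z) := by
  refine summable_of_ratio_norm_eventually_le (r := 1 / 2) (by norm_num) ?_
  have hratio := (tendsto_F11Term_ratio a b z).norm.eventually_lt_const
    (by norm_num : ‖(0 : ℂ)‖ < 1 / 2)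
  filter_upwards [hratio] with n hn
  rw [F11Term_succ, norm_mul]
  gcongr

lemma F11Term_sub_F11Term_add_one {a b : ℂ} (hb : ∀ n : ℕ, b ≠ -n) (z : ℂ) (n : ℕ) :
    F11Term a b z (n + 1) - F11Term a (b + 1) z (n + 1)
      = a / (b * (b + 1)) * z * F11Term (a + 1) (b + 2) z n := by
  have hb0 : b ≠ 0 := by simpa using hb 0
  have hb1 : b + 1 ≠ 0 := by simpa using add_natCast_ne_neg_natCast hb 1 0
  have hbn : b + 1 + n ≠ 0 := fun h => hb (n + 1) (by push_cast; linear_combination h)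
  have hP : poch (b + 1) n ≠ 0 := poch_ne_zero (by simpa using add_natCast_ne_neg_natCast hb 1) n
  have hQ : poch (b + 2) n = poch (b + 1) n * (b + 1 + n) / (b + 1) := by
    rw [eq_div_iff hb1, ← poch_succ, poch_succ', add_assoc, one_add_one_eq_two, mul_comm]
  simp only [F11Term, hQ, poch_succ' a, poch_succ' b, poch_succ (b + 1), pow_succ,
    Nat.factorial_succ, Nat.cast_mul, Nat.cast_add, Nat.cast_one]
  field_simp
  ring

theorem F11_contiguous {a b : ℂ} (hb : ∀ n : ℕ, b ≠ -n) (z : ℂ) :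
    F11 a b z = F11 a (b + 1) z + a / (b * (b + 1)) * z * F11 (a + 1) (b + 2) z := by
  have hdiff : HasSum (fun n => F11Term a b z n - F11Term a (b + 1) z n)
      (a / (b * (b + 1)) * z * F11 (a + 1) (b + 2) z) := by
    rw [← hasSum_nat_add_iff' 1]
    simpa only [F11Term_sub_F11Term_add_one hb, Finset.range_one, Finset.sum_singleton,
      F11Term_zero, sub_self, sub_zero, F11_eq_tsum] using
      (summable_F11Term (a + 1) (b + 2) z).hasSum.mul_left (a / (b * (b + 1)) * z)
  exact eq_add_of_sub_eq'
    (((summable_F11Term a b z).hasSum.sub (summable_F11Term a (b + 1) z).hasSum).unique hdiff)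

noncomputable def betaIntegrand (a b : ℂ) (u : ℝ) : ℂ :=
  (u : ℂ) ^ (a - 1) * (1 - (u : ℂ)) ^ (b - 1)

section Beta

variable {a b : ℂ}

lemma integrableOn_betaIntegrand (ha : 0 < a.re) (hb : 0 < b.re) :
    IntegrableOn (betaIntegrand a b) (Ioo (0 : ℝ) 1) := by
  have h := betaIntegral_convergent ha hb
  rw [intervalIntegrable_iff_integrableOn_Ioc_of_le zero_le_one] at h
  exact h.mono_set Ioo_subset_Ioc_self

lemma integral_betaIntegrand (ha : 0 < a.re) (hb : 0 < b.re) :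
    ∫ u in Ioo (0 : ℝ) 1, betaIntegrand a b u = Gamma a * Gamma b / Gamma (a + b) := by
  rw [Gamma_mul_Gamma_eq_betaIntegral ha hb, betaIntegral,
    intervalIntegral.integral_of_le zero_le_one, integral_Ioc_eq_integral_Ioo,
    mul_div_cancel_left₀ _ (Gamma_ne_zero_of_re_pos (add_pos ha hb))]
  rfl

lemma cpow_mul_betaIntegrand {u : ℝ} (hu : 0 < u) (c : ℂ) :
    (u : ℂ) ^ c * betaIntegrand a b u = betaIntegrand (a + c) b u := by
  rw [betaIntegrand, betaIntegrand, ← mul_assoc, ← cpow_add _ _ (ofReal_ne_zero.mpr hu.ne')]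
  ring_nf

lemma integral_pow_mul_betaIntegrand (ha : 0 < a.re) (hb : 0 < b.re) (n : ℕ) :
    ∫ u in Ioo (0 : ℝ) 1, (u : ℂ) ^ n * betaIntegrand a b u
      = poch a n / poch (a + b) n * (Gamma a * Gamma b / Gamma (a + b)) := by
  have han : 0 < (a + n).re := by rw [add_re, natCast_re]; positivity
  have hab : 0 < (a + b).re := add_pos ha hb
  rw [setIntegral_congr_fun measurableSet_Ioo fun u hu => by
      rw [← cpow_natCast, cpow_mul_betaIntegrand hu.1],
    integral_betaIntegrand han hb, poch_eq_Gamma_div ha, poch_eq_Gamma_div hab,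
    add_right_comm]
  have := Gamma_ne_zero_of_re_pos ha
  have := Gamma_ne_zero_of_re_pos hab
  have := Gamma_ne_zero_of_re_pos (by rw [add_re, natCast_re]; positivity : 0 < (a + b + n).re)
  field_simp

lemma integrableOn_pow_mul_betaIntegrand (ha : 0 < a.re) (hb : 0 < b.re) (n : ℕ) :
    IntegrableOn (fun u : ℝ => (u : ℂ) ^ n * betaIntegrand a b u) (Ioo 0 1) := by
  have han : 0 < (a + n).re := by rw [add_re, natCast_re]; positivity
  refine (integrableOn_betaIntegrand han hb).congr_fun (fun u hu => ?_) measurableSet_Ioo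
  rw [← cpow_natCast, cpow_mul_betaIntegrand hu.1]

lemma integral_norm_pow_mul_betaIntegrand_le (ha : 0 < a.re) (hb : 0 < b.re) (n : ℕ) :
    ∫ u in Ioo (0 : ℝ) 1, ‖(u : ℂ) ^ n * betaIntegrand a b u‖
      ≤ ∫ u in Ioo (0 : ℝ) 1, ‖betaIntegrand a b u‖ := by
  refine setIntegral_mono_on (integrableOn_pow_mul_betaIntegrand ha hb n).norm
    (integrableOn_betaIntegrand ha hb).norm measurableSet_Ioo fun u hu => ?_
  rw [norm_mul, norm_pow, norm_real, Real.norm_of_nonneg hu.1.le]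
  exact mul_le_of_le_one_left (norm_nonneg _) (pow_le_one₀ hu.1.le hu.2.le)

end Beta

theorem integral_exp_mul_betaIntegrand {a b : ℂ} (ha : 0 < a.re) (hab : a.re < b.re) (z : ℂ) :
    ∫ u in Ioo (0 : ℝ) 1, exp (z * u) * betaIntegrand a (b - a) u
      = Gamma a * Gamma (b - a) / Gamma b * F11 a b z := by
  have hba : 0 < (b - a).re := sub_pos.mpr hab
  set β := betaIntegrand a (b - a)
  set F : ℕ → ℝ → ℂ := fun n u => z ^ n / n.factorial * ((u : ℂ) ^ n * β u)
  have hF_int (n : ℕ) : IntegrableOn (F n) (Ioo 0 1) :=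
    (integrableOn_pow_mul_betaIntegrand ha hba n).const_mul _
  have hF_norm (n : ℕ) : ∫ u in Ioo (0 : ℝ) 1, ‖F n u‖
      ≤ ‖z‖ ^ n / n.factorial * ∫ u in Ioo (0 : ℝ) 1, ‖β u‖ := by
    simp only [F, norm_mul (z ^ n / (n.factorial : ℂ)), integral_const_mul, norm_div, norm_pow,
      Complex.norm_natCast]
    exact mul_le_mul_of_nonneg_left (integral_norm_pow_mul_betaIntegrand_le ha hba n)
      (by positivity)
  have hF_sum : Summable fun n => ∫ u in Ioo (0 : ℝ) 1, ‖F n u‖ :=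
    .of_nonneg_of_le (fun n => integral_nonneg fun u => norm_nonneg _) hF_norm
      ((Real.summable_pow_div_factorial ‖z‖).mul_right _)
  have hexp (u : ℝ) : exp (z * u) * β u = ∑' n, F n u := by
    rw [exp_eq_exp_ℂ, NormedSpace.exp_eq_tsum_div, ← tsum_mul_right]
    congr 1 with n
    simp only [F, mul_pow]
    ring
  have hF_integral (n : ℕ) : ∫ u in Ioo (0 : ℝ) 1, F n u
      = Gamma a * Gamma (b - a) / Gamma b * F11Term a b z n := by
    rw [integral_const_mul, integral_pow_mul_betaIntegrand ha hba, add_sub_cancel, F11Term]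
    ring
  calc ∫ u in Ioo (0 : ℝ) 1, exp (z * u) * β u
      = ∑' n, ∫ u in Ioo (0 : ℝ) 1, F n u := by
        simp only [hexp]
        exact (integral_tsum_of_summable_integral_norm hF_int hF_sum).symm
    _ = Gamma a * Gamma (b - a) / Gamma b * F11 a b z := by
        rw [tsum_congr hF_integral, tsum_mul_left, F11_eq_tsum]

noncomputable def eulerMellinKernel (s a b : ℂ) (t u : ℝ) : ℂ :=
  (t : ℂ) ^ (s - 1) * (exp (-t * u) * betaIntegrand a (b - a) u)

section EulerMellinKernel

variable {s a b : ℂ}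

lemma integral_eulerMellinKernel_Ioo (ha : 0 < a.re) (hab : a.re < b.re) (t : ℝ) :
    ∫ u in Ioo (0 : ℝ) 1, eulerMellinKernel s a b t u
      = (t : ℂ) ^ (s - 1) * (Gamma a * Gamma (b - a) / Gamma b * F11 a b (-t)) := by
  rw [← integral_exp_mul_betaIntegrand ha hab, ← integral_const_mul]
  rfl

lemma integral_eulerMellinKernel_Ioi (hs : 0 < s.re) {u : ℝ} (hu : 0 < u) :
    ∫ t in Ioi (0 : ℝ), eulerMellinKernel s a b t u
      = Gamma s * betaIntegrand (a - s) (b - a) u := by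
  have harg : (u : ℂ).arg ≠ Real.pi := by
    rw [arg_ofReal_of_nonneg hu.le]
    exact Real.pi_ne_zero.symm
  simp only [eulerMellinKernel]
  rw [setIntegral_congr_fun measurableSet_Ioi fun t _ => by
      rw [← mul_assoc, neg_mul, mul_comm (t : ℂ) (u : ℂ)],
    integral_mul_const, integral_cpow_mul_exp_neg_mul_Ioi hs hu, one_div, inv_cpow _ _ harg,
    ← cpow_neg, mul_comm _ (Gamma s), mul_assoc, cpow_mul_betaIntegrand hu, ← sub_eq_add_neg]

lemma norm_eulerMellinKernel {t : ℝ} (ht : 0 < t) (u : ℝ) :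
    ‖eulerMellinKernel s a b t u‖
      = t ^ (s.re - 1) * Real.exp (-(u * t)) * ‖betaIntegrand a (b - a) u‖ := by
  rw [eulerMellinKernel, norm_mul, norm_mul, norm_cpow_eq_rpow_re_of_pos ht, norm_exp]
  simp [mul_comm u, mul_assoc]

lemma continuousOn_eulerMellinKernel :
    ContinuousOn (Function.uncurry (eulerMellinKernel s a b)) (Ioi 0 ×ˢ Ioo 0 1) := by
  rintro ⟨t, u⟩ ⟨ht, hu⟩
  have h1u : 1 - (u : ℂ) ∈ slitPlane := by
    rw [← ofReal_one, ← ofReal_sub]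
    exact ofReal_mem_slitPlane.mpr (by linarith [hu.2])
  have ht' : (t : ℂ) ∈ slitPlane := ofReal_mem_slitPlane.mpr ht
  have hu' : (u : ℂ) ∈ slitPlane := ofReal_mem_slitPlane.mpr hu.1
  refine ContinuousAt.continuousWithinAt ?_
  simp only [Function.uncurry_def, eulerMellinKernel, betaIntegrand]
  fun_prop (disch := assumption)

lemma integrable_eulerMellinKernel (hs : 0 < s.re) (hsa : s.re < a.re) (hab : a.re < b.re) :
    Integrable (Function.uncurry (eulerMellinKernel s a b))
      ((volume.restrict (Ioi 0)).prod (volume.restrict (Ioo 0 1))) := by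
  have has : 0 < (a - s).re := sub_pos.mpr hsa
  have hba : 0 < (b - a).re := sub_pos.mpr hab
  have hmeas : AEStronglyMeasurable (Function.uncurry (eulerMellinKernel s a b))
      ((volume.restrict (Ioi 0)).prod (volume.restrict (Ioo 0 1))) := by
    rw [Measure.prod_restrict]
    exact continuousOn_eulerMellinKernel.aestronglyMeasurable
      (measurableSet_Ioi.prod measurableSet_Ioo)
  refine (integrable_prod_iff' hmeas).mpr ⟨?_, ?_⟩
  · rw [ae_restrict_iff' measurableSet_Ioo]
    refine .of_forall fun u hu => ?_
    have hsection : ContinuousOn (eulerMellinKernel s a b · u) (Ioi 0) :=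
      continuousOn_eulerMellinKernel.comp (Continuous.prodMk_left u).continuousOn
        fun t ht => ⟨ht, hu⟩
    have hdom : IntegrableOn (fun t : ℝ => t ^ (s.re - 1) * Real.exp (-(u * t))) (Ioi 0) := by
      simpa using integrableOn_rpow_mul_exp_neg_mul_rpow (p := 1) (by linarith) one_pos hu.1
    refine (hdom.mul_const ‖betaIntegrand a (b - a) u‖).mono'
      (hsection.aestronglyMeasurable measurableSet_Ioi) ?_
    rw [ae_restrict_iff' measurableSet_Ioi]
    exact .of_forall fun t ht => (norm_eulerMellinKernel ht u).le
  · refine ((integrableOn_betaIntegrand has hba).norm.const_mul (Real.Gamma s.re)).congr ?_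
    rw [EventuallyEq, ae_restrict_iff' measurableSet_Ioo]
    refine .of_forall fun u hu => ?_
    rw [sub_eq_add_neg a, ← cpow_mul_betaIntegrand hu.1, norm_mul,
      norm_cpow_eq_rpow_re_of_pos hu.1, neg_re, Real.rpow_neg hu.1.le, ← Real.inv_rpow hu.1.le,
      ← one_div]
    simp only [Function.uncurry_apply_pair]
    rw [setIntegral_congr_fun measurableSet_Ioi fun t ht => norm_eulerMellinKernel ht u,
      integral_mul_const, Real.integral_rpow_mul_exp_neg_mul_Ioi hs hu.1]
    ring

end EulerMellinKernel

noncomputable def mellinF11 (a b s : ℂ) : ℂ :=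
  Gamma s * Gamma b * Gamma (a - s) / (Gamma a * Gamma (b - s))

theorem hasMellin_F11_neg_of_re_lt {a b s : ℂ} (hs : 0 < s.re) (hsa : s.re < a.re)
    (hab : a.re < b.re) : HasMellin (fun t : ℝ => F11 a b (-t)) s (mellinF11 a b s) := by
  have ha : 0 < a.re := hs.trans hsa
  have has : 0 < (a - s).re := sub_pos.mpr hsa
  have hba : 0 < (b - a).re := sub_pos.mpr hab
  have hK := integrable_eulerMellinKernel hs hsa hab
  set C := Gamma a * Gamma (b - a) / Gamma b
  have hC : C ≠ 0 := div_ne_zero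
    (mul_ne_zero (Gamma_ne_zero_of_re_pos ha) (Gamma_ne_zero_of_re_pos hba))
    (Gamma_ne_zero_of_re_pos (ha.trans hab))
  have hinner (t : ℝ) : ∫ u in Ioo (0 : ℝ) 1, eulerMellinKernel s a b t u
      = C • ((t : ℂ) ^ (s - 1) • F11 a b (-t)) := by
    rw [integral_eulerMellinKernel_Ioo ha hab, smul_eq_mul, smul_eq_mul]
    ring
  have hconv : MellinConvergent (fun t : ℝ => F11 a b (-t)) s := by
    have := hK.integral_prod_left
    simp only [Function.uncurry_apply_pair, hinner] at this
    exact (integrable_smul_iff hC _).mp this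
  refine ⟨hconv, ?_⟩
  have hswap := integral_integral_swap hK
  simp only [hinner, integral_smul] at hswap
  rw [setIntegral_congr_fun measurableSet_Ioo fun u hu => integral_eulerMellinKernel_Ioi hs hu.1,
    integral_const_mul, integral_betaIntegrand has hba, sub_add_sub_cancel'] at hswap
  rw [mellin, mellinF11, ← mul_right_inj' hC, ← smul_eq_mul, hswap]
  have := Gamma_ne_zero_of_re_pos ha
  have := Gamma_ne_zero_of_re_pos (ha.trans hab)
  simp only [C]
  field_simp

lemma mellinF11_contiguous {a b s : ℂ} (ha : a ≠ 0) (hb : b ≠ 0) (hb1 : b + 1 ≠ 0)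
    (hs : s ≠ 0) :
    mellinF11 a (b + 1) s - a / (b * (b + 1)) * mellinF11 (a + 1) (b + 2) (s + 1)
      = mellinF11 a b s := by
  rw [mellinF11, mellinF11, mellinF11, show (a + 1) - (s + 1) = a - s by ring,
    show b + 2 - (s + 1) = b - s + 1 by ring, show b + 1 - s = b - s + 1 by ring,
    show b + 2 = b + 1 + 1 by ring, Gamma_add_one _ hb1, Gamma_add_one _ hb, Gamma_add_one _ hs,
    Gamma_add_one _ ha]
  simp only [div_eq_mul_inv, mul_inv]
  -- valid even when `b - s` is a pole of `Γ`, where `(Γ (b - s))⁻¹ = 0`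
  rw [one_div_Gamma_eq_self_mul_one_div_Gamma_add_one (b - s)]
  generalize (Gamma (b - s + 1))⁻¹ = G
  field_simp

theorem hasMellin_F11_neg {a b s : ℂ} (hs : 0 < s.re) (hsa : s.re < a.re)
    (hb : ∀ n : ℕ, b ≠ -n) : HasMellin (fun t : ℝ => F11 a b (-t)) s (mellinF11 a b s) := by
  obtain ⟨k, hk⟩ := exists_nat_gt (a.re - b.re)
  induction k generalizing a b s with
  | zero => exact hasMellin_F11_neg_of_re_lt hs hsa (by simpa using hk)
  | succ k ih =>
    have hb1 : ∀ n : ℕ, b + 1 ≠ -n := by simpa using add_natCast_ne_neg_natCast hb 1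
    have hb2 : ∀ n : ℕ, b + 2 ≠ -n := by simpa using add_natCast_ne_neg_natCast hb 2
    push_cast at hk
    have h1 := ih hs hsa hb1 (by rw [add_re, one_re]; linarith)
    have h2 := ih (a := a + 1) (b := b + 2) (s := s + 1) (by rw [add_re, one_re]; linarith)
      (by rw [add_re, add_re, one_re]; linarith) hb2
      (by rw [add_re, add_re, one_re, re_ofNat]; linarith)
    set c := a / (b * (b + 1))
    have hF11 (t : ℝ) : F11 a b (-t)
        = F11 a (b + 1) (-t) + (-c) • ((t : ℂ) ^ (1 : ℂ) • F11 (a + 1) (b + 2) (-t)) := by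
      rw [F11_contiguous hb, cpow_one, smul_eq_mul, smul_eq_mul]
      ring
    have hsum := hasMellin_add h1.1 ((MellinConvergent.cpow_smul.mpr h2.1).const_smul (-c))
    have ha0 : a ≠ 0 := by rintro rfl; exact (hs.trans hsa).ne' zero_re
    have hs0 : s ≠ 0 := by rintro rfl; exact hs.ne' zero_re
    rw [mellin_const_smul, mellin_cpow_smul, h1.2, h2.2, smul_eq_mul, neg_mul, ← sub_eq_add_neg,
      mellinF11_contiguous ha0 (by simpa using hb 0) (by simpa using hb1 0) hs0] at hsum
    simpa only [hF11] using hsum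

/-- Mellin transform of `₁F₁` at negative argument:
`∫₀^∞ t^{s−1} ₁F₁[a;b;−t] dt = Γ(s)Γ(b)Γ(a−s)/(Γ(a)Γ(b−s))`. -/
theorem mellin_1F1 (a b s : ℂ) (hs : 0 < s.re) (hsa : s.re < a.re)
    (hb : ∀ n : ℕ, b ≠ -n) :
    (∫ t in Set.Ioi (0 : ℝ), (t : ℂ) ^ (s - 1) * F11 a b (-(t : ℂ)))
      = Complex.Gamma s * Complex.Gamma b * Complex.Gamma (a - s) /
          (Complex.Gamma a * Complex.Gamma (b - s)) :=
  (hasMellin_F11_neg hs hsa hb).2
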